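/- Let α_i > 0 (i = 1,…,s) and β > 0, let ℳ = {M_0, M_1, M_2} be (n+m) × (n+m) matrices with T_ℳ well-defined, and let {v^k} be generated by v^{k+1} = T_ℳ(v^k, v^{k−1}) from v^0, v^1. If ℳ satisfies Condition-M, then with H := M_0 + M_2 and v̄_K := (1/K)∑_{k=2}^{K+1} v^k, for every K ≥ 1 and every v ∈ ℝ^{n+m}: G(v̄_K, v) ≤ ( (3/4)‖v^1 − v‖_H² + (1/2)‖v^1 − v^0‖_H² ) / K. -/

import Mathlib

/-!
`𝒯` is the resolvent of `∂Φ` in the metric `R`, so `v^{k+2} = 𝒯(z)` with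
`z = (E - R⁻¹M₀)v^{k+2} + R⁻¹M₁v^{k+1} + R⁻¹M₂v^k` is the variational inequality
`⟨R(v^{k+2} - z), u - v^{k+2}⟩ + Φ(u) - Φ(v^{k+2}) ≥ 0`, where
`R(z - v^{k+2}) = S_A v^{k+2} + M₁(v^{k+1} - v^{k+2}) + M₂(v^k - v^{k+2})`. As `S_A` is skew,
this bounds `G(v^{k+2}, u)` by `⟨v^{k+2} - u, M₁(v^{k+1} - v^{k+2}) + M₂(v^k - v^{k+2})⟩`.

Condition-M gives `⟨c, M₂ a⟩ ≤ ¼(‖a‖²_H + ‖c‖²_H)`, and with `M₁ = H - 2M₂` that bound is at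
most `E_k - E_{k+1}` for the nonnegative energy
`E_k = ½‖v^{k+1} - u‖²_H - ⟨v^{k+1} - u, M₂(v^{k+1} - v^k)⟩ + ¼‖v^{k+1} - v^k‖²_H`.
The sum telescopes to `E_0 ≤ ¾‖v¹ - u‖²_H + ½‖v¹ - v⁰‖²_H`, and Jensen's inequality for the
convex function `G(·, u)` transfers the bound to the average `v̄_K`. When `Φ(u) = +∞`,
`G(v̄_K, u) = -∞`.
-/

open Matrix Filter Topology

noncomputable section

/-- Spectral norm (largest singular value) of a real matrix. -/
def specNorm {p q : Type*} [Fintype p] [Fintype q] [DecidableEq q]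
    (M : Matrix p q ℝ) : ℝ :=
  ‖LinearMap.toContinuousLinearMap (Matrix.toEuclideanLin M)‖

/-- The square root of a positive semidefinite matrix, as `Matrix.PosSemidef.sqrt` was defined
in the older Mathlib: `U * diagonal (√ ∘ eigenvalues) * star U`. -/
def psdSqrt {d : Type*} [Fintype d] [DecidableEq d] {A : Matrix d d ℝ} (hA : A.PosSemidef) :
    Matrix d d ℝ :=
  hA.1.eigenvectorUnitary.1 * diagonal ((↑) ∘ (√·) ∘ hA.1.eigenvalues) *
    (star hA.1.eigenvectorUnitary : Matrix d d ℝ)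

/-- Condition-M for a triple of matrices: `M0 = M1 + M2`, `H := M0 + M2` is symmetric
positive definite, and `‖H^{-1/2} M2 H^{-1/2}‖₂ < 1/2` (here `H^{-1/2}` is the positive
semidefinite square root of `H⁻¹`). -/
def ConditionM {d : Type*} [Fintype d] [DecidableEq d] (M0 M1 M2 : Matrix d d ℝ) : Prop :=
  M0 = M1 + M2 ∧ ∃ hH : (M0 + M2).PosDef,
    specNorm (psdSqrt hH.inv.posSemidef * M2 * psdSqrt hH.inv.posSemidef) < 1 / 2

/-- The cost functional defining the proximity operator `prox_{φ,H}` at input `x`. -/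
def proxCost {ι : Type*} [Fintype ι] (φ : (ι → ℝ) → EReal) (H : Matrix ι ι ℝ)
    (x u : ι → ℝ) : EReal :=
  ((((1 : ℝ) / 2) * ((u - x) ⬝ᵥ H.mulVec (u - x)) : ℝ) : EReal) + φ u

/-- `p = prox_{φ,H}(x)`: `p` is the unique minimizer of the prox cost. -/
def IsProx {ι : Type*} [Fintype ι] (φ : (ι → ℝ) → EReal) (H : Matrix ι ι ℝ)
    (x p : ι → ℝ) : Prop :=
  (∀ u, proxCost φ H x p ≤ proxCost φ H x u) ∧
  ∀ q, (∀ u, proxCost φ H x q ≤ proxCost φ H x u) → q = p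

/-- Proper lower semicontinuous convex extended-real-valued function. -/
def ProperConvexLsc {ι : Type*} [Fintype ι] (f : (ι → ℝ) → EReal) : Prop :=
  (∃ x, f x ≠ ⊤) ∧ (∀ x, f x ≠ ⊥) ∧ LowerSemicontinuous f ∧
  ∀ x y : ι → ℝ, ∀ t : ℝ, 0 < t → t < 1 →
    f (t • x + (1 - t) • y) ≤ (t : EReal) * f x + ((1 - t : ℝ) : EReal) * f y

/-- Scaling of an extended-real-valued function by a real constant. -/
def smulF {V : Type*} (c : ℝ) (φ : V → EReal) : V → EReal := fun u => (c : EReal) * φ u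

/-- The conjugate of the indicator of `C = {b}`: `ι_C*(y) = ⟨y, b⟩`. -/
def iotaCstar {m : ℕ} (b : Fin m → ℝ) : (Fin m → ℝ) → EReal :=
  fun y => ((y ⬝ᵥ b : ℝ) : EReal)

variable {s m : ℕ} {n : Fin s → ℕ}

/-- Index type for the concatenated variable `x = (x_1, …, x_s)`. -/
abbrev XIdx (n : Fin s → ℕ) := (i : Fin s) × Fin (n i)

/-- Index type for the full variable `v = (x, y)`. -/
abbrev FIdx (n : Fin s → ℕ) (m : ℕ) := XIdx n ⊕ Fin m

/-- The `i`-th block of a concatenated vector. -/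
def blk (x : XIdx n → ℝ) (i : Fin s) : Fin (n i) → ℝ := fun j => x ⟨i, j⟩

/-- The matrix `A = [A_1 … A_s]`. -/
def bigA (A : ∀ i : Fin s, Matrix (Fin m) (Fin (n i)) ℝ) : Matrix (Fin m) (XIdx n) ℝ :=
  Matrix.of fun r p => A p.1 r p.2

/-- The separable objective `∑ f_i(x_i)`. -/
def objSum (f : ∀ i : Fin s, (Fin (n i) → ℝ) → EReal) (x : XIdx n → ℝ) : EReal :=
  ∑ i, f i (blk x i)

/-- `∑ A_i x_i`. -/
def sumAx (A : ∀ i : Fin s, Matrix (Fin m) (Fin (n i)) ℝ) (x : XIdx n → ℝ) : Fin m → ℝ :=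
  ∑ i, (A i).mulVec (blk x i)

/-- `x` is a solution of problem (P). -/
def IsSolution (f : ∀ i : Fin s, (Fin (n i) → ℝ) → EReal)
    (A : ∀ i : Fin s, Matrix (Fin m) (Fin (n i)) ℝ) (b : Fin m → ℝ)
    (x : XIdx n → ℝ) : Prop :=
  sumAx A x = b ∧ ∀ z : XIdx n → ℝ, sumAx A z = b → objSum f x ≤ objSum f z

/-- `b ∈ A(ri(dom(∑ f_i)))` where `ri` is the relative (intrinsic) interior. -/
def RiCond (f : ∀ i : Fin s, (Fin (n i) → ℝ) → EReal)
    (A : ∀ i : Fin s, Matrix (Fin m) (Fin (n i)) ℝ) (b : Fin m → ℝ) : Prop :=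
  b ∈ (fun x => sumAx A x) '' intrinsicInterior ℝ {x : XIdx n → ℝ | objSum f x ≠ ⊤}

/-- The `x`-part of a full vector. -/
def xpart (v : FIdx n m → ℝ) : XIdx n → ℝ := fun p => v (Sum.inl p)

/-- The `y`-part of a full vector. -/
def ypart (v : FIdx n m → ℝ) : Fin m → ℝ := fun r => v (Sum.inr r)

/-- The function `Φ(x_1,…,x_s,y) = ∑ f_i(x_i) + ι_C*(y)`. -/
def PhiFun (f : ∀ i : Fin s, (Fin (n i) → ℝ) → EReal) (b : Fin m → ℝ)
    (v : FIdx n m → ℝ) : EReal :=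
  objSum f (xpart v) + iotaCstar b (ypart v)

/-- The diagonal matrix `R = diag((β/α_1)I, …, (β/α_s)I, (1/β)I)`. -/
def Rmat (α : Fin s → ℝ) (β : ℝ) : Matrix (FIdx n m) (FIdx n m) ℝ :=
  Matrix.diagonal (Sum.elim (fun p : XIdx n => β / α p.1) fun _ => 1 / β)

/-- The inverse `R⁻¹` of the diagonal matrix `R`. -/
def Rinv (α : Fin s → ℝ) (β : ℝ) : Matrix (FIdx n m) (FIdx n m) ℝ :=
  Matrix.diagonal (Sum.elim (fun p : XIdx n => α p.1 / β) fun _ => β)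

/-- The expansive matrix `E = [[I, −P⁻¹Aᵀ],[βA, I]]`. -/
def Emat (A : ∀ i : Fin s, Matrix (Fin m) (Fin (n i)) ℝ) (α : Fin s → ℝ) (β : ℝ) :
    Matrix (FIdx n m) (FIdx n m) ℝ :=
  Matrix.fromBlocks 1 (-(Matrix.diagonal (fun p : XIdx n => α p.1 / β) * (bigA A)ᵀ))
    (β • bigA A) 1

/-- The skew-symmetric matrix `S_A = [[0, −Aᵀ],[A, 0]]`. -/
def SAmat (A : ∀ i : Fin s, Matrix (Fin m) (Fin (n i)) ℝ) :
    Matrix (FIdx n m) (FIdx n m) ℝ :=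
  Matrix.fromBlocks 0 (-(bigA A)ᵀ) (bigA A) 0

/-- `w = 𝒯(v)`, where `𝒯(x_1,…,x_s,y) = (prox_{(α_1/β)f_1}x_1, …, prox_{(α_s/β)f_s}x_s,
prox_{β ι_C*}y)`. -/
def isT (f : ∀ i : Fin s, (Fin (n i) → ℝ) → EReal) (b : Fin m → ℝ)
    (α : Fin s → ℝ) (β : ℝ) (v w : FIdx n m → ℝ) : Prop :=
  (∀ i, IsProx (smulF (α i / β) (f i)) 1 (blk (xpart v) i) (blk (xpart w) i)) ∧
  IsProx (smulF β (iotaCstar b)) 1 (ypart v) (ypart w)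

/-- `w = T_ℳ(u₁, u₂)`, i.e. `w = 𝒯((E − R⁻¹M₀)w + R⁻¹M₁u₁ + R⁻¹M₂u₂)`. -/
def isTM (f : ∀ i : Fin s, (Fin (n i) → ℝ) → EReal)
    (A : ∀ i : Fin s, Matrix (Fin m) (Fin (n i)) ℝ) (b : Fin m → ℝ)
    (α : Fin s → ℝ) (β : ℝ) (M0 M1 M2 : Matrix (FIdx n m) (FIdx n m) ℝ)
    (u1 u2 w : FIdx n m → ℝ) : Prop :=
  isT f b α β ((Emat A α β - Rinv α β * M0).mulVec w + (Rinv α β * M1).mulVec u1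
    + (Rinv α β * M2).mulVec u2) w

/-- `T_ℳ` is well-defined. -/
def TMWellDefined (f : ∀ i : Fin s, (Fin (n i) → ℝ) → EReal)
    (A : ∀ i : Fin s, Matrix (Fin m) (Fin (n i)) ℝ) (b : Fin m → ℝ)
    (α : Fin s → ℝ) (β : ℝ) (M0 M1 M2 : Matrix (FIdx n m) (FIdx n m) ℝ) : Prop :=
  ∀ u1 u2 : FIdx n m → ℝ, ∃! w, isTM f A b α β M0 M1 M2 u1 u2 w


/-- `G(v, v') := Φ(v) − Φ(v') + ⟨v', S_A v⟩`, valued in the extended reals. -/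
def Gfun {s m : ℕ} {n : Fin s → ℕ} (f : ∀ i : Fin s, (Fin (n i) → ℝ) → EReal)
    (A : ∀ i : Fin s, Matrix (Fin m) (Fin (n i)) ℝ) (b : Fin m → ℝ)
    (v v' : FIdx n m → ℝ) : EReal :=
  PhiFun f b v - PhiFun f b v' + ((v' ⬝ᵥ (SAmat A).mulVec v : ℝ) : EReal)

lemma EReal.coe_finset_sum {ι : Type*} (t : Finset ι) (r : ι → ℝ) :
    ((∑ i ∈ t, r i : ℝ) : EReal) = ∑ i ∈ t, (r i : EReal) :=
  map_sum (⟨⟨Real.toEReal, EReal.coe_zero⟩, EReal.coe_add⟩ : ℝ →+ EReal) r t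

lemma EReal.finset_sum_eq_top {ι : Type*} [DecidableEq ι] {t : Finset ι} {g : ι → EReal}
    (hbot : ∀ i ∈ t, g i ≠ ⊥) {j : ι} (hj : j ∈ t) (htop : g j = ⊤) : ∑ i ∈ t, g i = ⊤ := by
  rw [← Finset.add_sum_erase _ _ hj, htop]
  exact EReal.top_add_of_ne_bot <| Finset.sum_induction _ (· ≠ ⊥)
    (fun _ _ ha hb => EReal.add_ne_bot_iff.2 ⟨ha, hb⟩) EReal.zero_ne_bot
    fun i hi => hbot i (Finset.mem_of_mem_erase hi)

lemma nonneg_of_forall_nonneg_add_mul {C D : ℝ}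
    (h : ∀ t : ℝ, 0 < t → t < 1 → 0 ≤ C + t * D) : 0 ≤ C := by
  have hlim : Tendsto (fun t : ℝ => C + t * D) (𝓝[>] 0) (𝓝 C) := by
    refine (Continuous.tendsto' ?_ 0 C (by simp)).mono_left nhdsWithin_le_nhds
    fun_prop
  refine ge_of_tendsto hlim ?_
  filter_upwards [Ioo_mem_nhdsGT one_pos] with t ht using h t ht.1 ht.2

lemma ConvexOn.variational_ineq_of_isMin {ι : Type*} [Fintype ι] {D : Set (ι → ℝ)}
    {φ : (ι → ℝ) → ℝ} (hφ : ConvexOn ℝ D φ) {x p u : ι → ℝ} (hp : p ∈ D) (hu : u ∈ D)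
    (hmin : IsMinOn (fun q => 1 / 2 * ((q - x) ⬝ᵥ (q - x)) + φ q) D p) :
    0 ≤ (p - x) ⬝ᵥ (u - p) + (φ u - φ p) := by
  refine nonneg_of_forall_nonneg_add_mul (D := 1 / 2 * ((u - p) ⬝ᵥ (u - p))) fun t ht0 ht1 => ?_
  have hq : p + t • (u - p) ∈ D := hφ.1.add_smul_sub_mem hp hu ⟨ht0.le, ht1.le⟩
  have hφq : φ (p + t • (u - p)) ≤ (1 - t) * φ p + t * φ u := by
    have h := hφ.2 hp hu (by linarith : 0 ≤ 1 - t) ht0.le (by ring)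
    rwa [show (1 - t) • p + t • u = p + t • (u - p) by module] at h
  have hexpand : (p + t • (u - p) - x) ⬝ᵥ (p + t • (u - p) - x)
      = (p - x) ⬝ᵥ (p - x) + 2 * t * ((p - x) ⬝ᵥ (u - p)) + t ^ 2 * ((u - p) ⬝ᵥ (u - p)) := by
    rw [show p + t • (u - p) - x = (p - x) + t • (u - p) by abel]
    simp only [add_dotProduct, dotProduct_add, smul_dotProduct, dotProduct_smul, smul_eq_mul,
      dotProduct_comm (u - p) (p - x)]
    ring
  have h := isMinOn_iff.1 hmin _ hq
  simp only [hexpand] at h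
  refine (mul_nonneg_iff_of_pos_left ht0).mp ?_
  nlinarith

lemma proxCost_smulF_one {ι : Type*} [Fintype ι] [DecidableEq ι] (c : ℝ)
    (f : (ι → ℝ) → EReal) (x u : ι → ℝ) :
    proxCost (smulF c f) 1 x u = ((1 / 2 * ((u - x) ⬝ᵥ (u - x)) : ℝ) : EReal) + c * f u := by
  simp [proxCost, smulF]

namespace ProperConvexLsc

variable {ι : Type*} [Fintype ι] {f : (ι → ℝ) → EReal}

lemma coe_toReal (hf : ProperConvexLsc f) {x : ι → ℝ} (hx : f x ≠ ⊤) :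
    ((f x).toReal : EReal) = f x :=
  EReal.coe_toReal hx (hf.2.1 x)

lemma apply_combo_le (hf : ProperConvexLsc f) {x y : ι → ℝ} (hx : f x ≠ ⊤) (hy : f y ≠ ⊤)
    {a b : ℝ} (ha : 0 < a) (hb : 0 < b) (hab : a + b = 1) :
    f (a • x + b • y) ≤ ((a * (f x).toReal + b * (f y).toReal : ℝ) : EReal) := by
  obtain rfl : b = 1 - a := by linarith
  have h := hf.2.2.2 x y a ha (by linarith)
  rwa [← hf.coe_toReal hx, ← hf.coe_toReal hy, ← EReal.coe_mul, ← EReal.coe_mul,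
    ← EReal.coe_add] at h

lemma convex_dom (hf : ProperConvexLsc f) : Convex ℝ {x | f x ≠ ⊤} :=
  convex_iff_forall_pos.2 fun _ hx _ hy _ _ ha hb hab =>
    ((hf.apply_combo_le hx hy ha hb hab).trans_lt (EReal.coe_lt_top _)).ne

lemma convexOn_toReal (hf : ProperConvexLsc f) :
    ConvexOn ℝ {x | f x ≠ ⊤} fun x => (f x).toReal := by
  refine convexOn_iff_forall_pos.2 ⟨hf.convex_dom, fun x hx y hy a b ha hb hab => ?_⟩
  have hz := hf.convex_dom hx hy ha.le hb.le hab
  have h := hf.apply_combo_le hx hy ha hb hab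
  rw [← hf.coe_toReal hz, EReal.coe_le_coe_iff] at h
  simpa only [smul_eq_mul] using h

variable [DecidableEq ι] {c : ℝ} {x p : ι → ℝ}

lemma ne_top_of_proxMin (hf : ProperConvexLsc f) (hc : 0 < c)
    (hp : ∀ u, proxCost (smulF c f) 1 x p ≤ proxCost (smulF c f) 1 x u) : f p ≠ ⊤ := by
  intro htop
  obtain ⟨u, hu⟩ := hf.1
  have h := hp u
  rw [proxCost_smulF_one, proxCost_smulF_one, htop, EReal.coe_mul_top_of_pos hc,
    EReal.coe_add_top, ← hf.coe_toReal hu, ← EReal.coe_mul, ← EReal.coe_add] at h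
  exact (EReal.coe_lt_top _).not_ge h

lemma prox_variational_ineq (hf : ProperConvexLsc f) (hc : 0 < c)
    (hp : ∀ u, proxCost (smulF c f) 1 x p ≤ proxCost (smulF c f) 1 x u) {u : ι → ℝ}
    (hu : f u ≠ ⊤) : 0 ≤ c⁻¹ * ((p - x) ⬝ᵥ (u - p)) + ((f u).toReal - (f p).toReal) := by
  have hpdom := hf.ne_top_of_proxMin hc hp
  have hmin : IsMinOn (fun q => 1 / 2 * ((q - x) ⬝ᵥ (q - x)) + c • (f q).toReal)
      {y | f y ≠ ⊤} p := isMinOn_iff.2 fun q hq => by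
    have h := hp q
    rw [proxCost_smulF_one, proxCost_smulF_one, ← hf.coe_toReal hpdom, ← hf.coe_toReal hq,
      ← EReal.coe_mul, ← EReal.coe_mul, ← EReal.coe_add, ← EReal.coe_add,
      EReal.coe_le_coe_iff] at h
    simpa only [smul_eq_mul] using h
  have h := (hf.convexOn_toReal.smul hc.le).variational_ineq_of_isMin hpdom hu hmin
  have hscale : c⁻¹ * ((p - x) ⬝ᵥ (u - p)) + ((f u).toReal - (f p).toReal)
      = c⁻¹ * ((p - x) ⬝ᵥ (u - p) + (c * (f u).toReal - c * (f p).toReal)) := by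
    field_simp
  rw [hscale]
  exact mul_nonneg (inv_nonneg.2 hc.le) h

end ProperConvexLsc

lemma properConvexLsc_iotaCstar {m : ℕ} (b : Fin m → ℝ) : ProperConvexLsc (iotaCstar b) := by
  refine ⟨⟨0, EReal.coe_ne_top _⟩, fun _ => EReal.coe_ne_bot _, ?_, fun x y t _ _ => ?_⟩
  · exact (continuous_coe_real_ereal.comp
      (continuous_id.dotProduct continuous_const)).lowerSemicontinuous
  · simp only [iotaCstar, add_dotProduct, smul_dotProduct, smul_eq_mul, ← EReal.coe_mul,
      ← EReal.coe_add, le_refl]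

lemma ConvexOn.finset_sum {𝕜 E β ι : Type*} [Semiring 𝕜] [PartialOrder 𝕜] [AddCommMonoid E]
    [AddCommMonoid β] [PartialOrder β] [IsOrderedAddMonoid β] [SMul 𝕜 E] [Module 𝕜 β]
    {s : Set E} (hs : Convex 𝕜 s) (t : Finset ι) {g : ι → E → β}
    (hg : ∀ i ∈ t, ConvexOn 𝕜 s (g i)) : ConvexOn 𝕜 s fun x => ∑ i ∈ t, g i x := by
  induction t using Finset.cons_induction with
  | empty => simpa using convexOn_const (0 : β) hs
  | cons a t ha ih =>
    simp only [Finset.sum_cons]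
    exact (hg a (Finset.mem_cons_self a t)).add (ih fun i hi => hg i (Finset.mem_cons_of_mem hi))

lemma Convex.avg_range_mem {E : Type*} [AddCommGroup E] [Module ℝ E] {s : Set E}
    (hs : Convex ℝ s) {K : ℕ} (hK : 0 < K) {p : ℕ → E} (hp : ∀ k, p k ∈ s) :
    (1 / (K : ℝ)) • ∑ k ∈ Finset.range K, p k ∈ s := by
  rw [Finset.smul_sum]
  exact hs.sum_mem (fun _ _ => by positivity) (by simp [hK.ne']) fun k _ => hp k

lemma ConvexOn.map_avg_range_le {E : Type*} [AddCommGroup E] [Module ℝ E] {s : Set E}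
    {g : E → ℝ} (hg : ConvexOn ℝ s g) {K : ℕ} (hK : 0 < K) {p : ℕ → E} (hp : ∀ k, p k ∈ s) :
    g ((1 / (K : ℝ)) • ∑ k ∈ Finset.range K, p k) ≤ 1 / K * ∑ k ∈ Finset.range K, g (p k) := by
  rw [Finset.smul_sum, Finset.mul_sum]
  exact hg.map_sum_le (fun _ _ => by positivity) (by simp [hK.ne']) fun k _ => hp k

section RealValued

variable (f : ∀ i : Fin s, (Fin (n i) → ℝ) → EReal)
    (A : ∀ i : Fin s, Matrix (Fin m) (Fin (n i)) ℝ) (b : Fin m → ℝ)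

def phiDom : Set (FIdx n m → ℝ) := {v | ∀ i, f i (blk (xpart v) i) ≠ ⊤}

def PhiReal (v : FIdx n m → ℝ) : ℝ := ∑ i, (f i (blk (xpart v) i)).toReal + ypart v ⬝ᵥ b

def GReal (v v' : FIdx n m → ℝ) : ℝ := PhiReal f b v - PhiReal f b v' + v' ⬝ᵥ SAmat A *ᵥ v

variable {f A b}

lemma convex_phiDom (hf : ∀ i, ProperConvexLsc (f i)) : Convex ℝ (phiDom (m := m) f) :=
  fun _ hv _ hw _ _ ha hb hab i => (hf i).convex_dom (hv i) (hw i) ha hb hab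

lemma convexOn_PhiReal (hf : ∀ i, ProperConvexLsc (f i)) :
    ConvexOn ℝ (phiDom f) (PhiReal f b) := by
  have hblk : ∀ i, ConvexOn ℝ (phiDom f) fun v : FIdx n m → ℝ => (f i (blk (xpart v) i)).toReal :=
    fun i => ((hf i).convexOn_toReal.comp_linearMap
      (LinearMap.funLeft ℝ ℝ fun j => (Sum.inl ⟨i, j⟩ : FIdx n m))).subset
      (fun v hv => hv i) (convex_phiDom hf)
  have hy : ConvexOn ℝ (phiDom f) fun v : FIdx n m → ℝ => ypart v ⬝ᵥ b :=
    ⟨convex_phiDom hf, fun x _ y _ a c _ _ _ => le_of_eq <| by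
      simp only [show ypart (a • x + c • y) = a • ypart x + c • ypart y from rfl, add_dotProduct,
        smul_dotProduct, smul_eq_mul]⟩
  exact (ConvexOn.finset_sum (convex_phiDom hf) Finset.univ fun i _ => hblk i).add hy

lemma convexOn_GReal_left (hf : ∀ i, ProperConvexLsc (f i)) (w : FIdx n m → ℝ) :
    ConvexOn ℝ (phiDom f) fun v => GReal f A b v w := by
  have hS : ConvexOn ℝ (phiDom f) fun v => w ⬝ᵥ SAmat A *ᵥ v :=
    ⟨convex_phiDom hf, fun x _ y _ a c _ _ _ => le_of_eq <| by
      simp only [mulVec_add, mulVec_smul, dotProduct_add, dotProduct_smul, smul_eq_mul]⟩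
  refine (((convexOn_PhiReal (b := b) hf).add
    (convexOn_const (-PhiReal f b w) (convex_phiDom hf))).add hS).congr fun v _ => ?_
  simp only [GReal, Pi.add_apply]
  ring

lemma PhiFun_eq_coe_PhiReal (hf : ∀ i, ProperConvexLsc (f i)) {v : FIdx n m → ℝ}
    (hv : v ∈ phiDom f) : PhiFun f b v = PhiReal f b v := by
  rw [PhiFun, PhiReal, EReal.coe_add, EReal.coe_finset_sum, objSum]
  simp only [(hf _).coe_toReal (hv _)]
  rfl

lemma PhiFun_eq_top (hf : ∀ i, ProperConvexLsc (f i)) {v : FIdx n m → ℝ}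
    (hv : v ∉ phiDom f) : PhiFun f b v = ⊤ := by
  obtain ⟨i, hi⟩ : ∃ i, f i (blk (xpart v) i) = ⊤ := by simpa [phiDom] using hv
  rw [PhiFun, objSum, EReal.finset_sum_eq_top (fun j _ => (hf j).2.1 _) (Finset.mem_univ i) hi]
  exact EReal.top_add_coe _

lemma Gfun_eq_coe_GReal (hf : ∀ i, ProperConvexLsc (f i)) {v w : FIdx n m → ℝ}
    (hv : v ∈ phiDom f) (hw : w ∈ phiDom f) : Gfun f A b v w = GReal f A b v w := by
  rw [Gfun, GReal, PhiFun_eq_coe_PhiReal hf hv, PhiFun_eq_coe_PhiReal hf hw]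
  norm_cast

lemma Gfun_eq_bot (hf : ∀ i, ProperConvexLsc (f i)) (v : FIdx n m → ℝ) {w : FIdx n m → ℝ}
    (hw : w ∉ phiDom f) : Gfun f A b v w = ⊥ := by
  rw [Gfun, PhiFun_eq_top hf hw, EReal.sub_top, EReal.bot_add]

end RealValued

section Scheme

variable {α : Fin s → ℝ} {β : ℝ}

lemma Rmat_mul_Rinv (hα : ∀ i, 0 < α i) (hβ : 0 < β) :
    Rmat (n := n) (m := m) α β * Rinv α β = 1 := by
  rw [Rmat, Rinv, diagonal_mul_diagonal, ← diagonal_one]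
  congr 1
  funext x
  rcases x with p | r
  · simp [(hα p.1).ne', hβ.ne']
  · simp [hβ.ne']

lemma Rmat_mul_Emat_sub_one (A : ∀ i : Fin s, Matrix (Fin m) (Fin (n i)) ℝ)
    (hα : ∀ i, 0 < α i) (hβ : 0 < β) : Rmat α β * (Emat A α β - 1) = SAmat A := by
  ext i j
  rw [Rmat, diagonal_mul, Matrix.sub_apply]
  rcases i with p | q <;> rcases j with p' | q'
  · simp [Emat, SAmat, one_apply]
  · simp [Emat, SAmat, one_apply, diagonal_mul]
    field_simp [(hα p.1).ne', hβ.ne']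
  · simp [Emat, SAmat, one_apply]
    field_simp [hβ.ne']
  · simp [Emat, SAmat, one_apply]

lemma Rmat_mulVec_fixedPoint_residual (A : ∀ i : Fin s, Matrix (Fin m) (Fin (n i)) ℝ)
    (hα : ∀ i, 0 < α i) (hβ : 0 < β) {M0 M1 M2 : Matrix (FIdx n m) (FIdx n m) ℝ}
    (hM0 : M0 = M1 + M2) (w u1 u2 : FIdx n m → ℝ) :
    Rmat α β *ᵥ (((Emat A α β - Rinv α β * M0) *ᵥ w + (Rinv α β * M1) *ᵥ u1
        + (Rinv α β * M2) *ᵥ u2) - w)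
      = SAmat A *ᵥ w + M1 *ᵥ (u1 - w) + M2 *ᵥ (u2 - w) := by
  have hRinv : ∀ (M : Matrix (FIdx n m) (FIdx n m) ℝ) x,
      Rmat α β *ᵥ ((Rinv α β * M) *ᵥ x) = M *ᵥ x := fun M x => by
    rw [mulVec_mulVec, ← Matrix.mul_assoc, Rmat_mul_Rinv hα hβ, Matrix.one_mul]
  have hE : Rmat α β *ᵥ (Emat A α β *ᵥ w) - Rmat α β *ᵥ w = SAmat A *ᵥ w := by
    rw [mulVec_mulVec, ← Rmat_mul_Emat_sub_one A hα hβ, Matrix.mul_sub, Matrix.mul_one,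
      sub_mulVec]
  simp only [mulVec_sub, mulVec_add, sub_mulVec, hRinv, hM0, add_mulVec]
  linear_combination hE

lemma dotProduct_SAmat_mulVec_self (A : ∀ i : Fin s, Matrix (Fin m) (Fin (n i)) ℝ)
    (w : FIdx n m → ℝ) : w ⬝ᵥ SAmat A *ᵥ w = 0 := by
  have hT : (SAmat A)ᵀ = -SAmat A := by
    rw [SAmat, fromBlocks_transpose]
    simp [fromBlocks_neg]
  have h : w ⬝ᵥ SAmat A *ᵥ w = -(w ⬝ᵥ SAmat A *ᵥ w) := by
    nth_rewrite 1 [dotProduct_mulVec]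
    rw [← mulVec_transpose, hT, neg_mulVec, neg_dotProduct, dotProduct_comm]
  linarith

lemma dotProduct_Rmat_mulVec (α : Fin s → ℝ) (β : ℝ) (z u : FIdx n m → ℝ) :
    u ⬝ᵥ Rmat α β *ᵥ z
      = ∑ i, β / α i * (blk (xpart z) i ⬝ᵥ blk (xpart u) i) + 1 / β * (ypart z ⬝ᵥ ypart u) := by
  simp only [dotProduct, Rmat, mulVec_diagonal, Fintype.sum_sum_type, ← Finset.univ_sigma_univ,
    Finset.sum_sigma, Finset.mul_sum]
  congr 1 <;> refine Finset.sum_congr rfl fun _ _ => ?_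
  · refine Finset.sum_congr rfl fun _ _ => ?_
    simp only [blk, xpart, Sum.elim_inl]
    ring
  · simp only [ypart, Sum.elim_inr]
    ring

lemma blk_xpart_sub (v w : FIdx n m → ℝ) (i : Fin s) :
    blk (xpart (v - w)) i = blk (xpart v) i - blk (xpart w) i := rfl

lemma ypart_sub (v w : FIdx n m → ℝ) : ypart (v - w) = ypart v - ypart w := rfl

variable {f : ∀ i : Fin s, (Fin (n i) → ℝ) → EReal} {b : Fin m → ℝ} {z w : FIdx n m → ℝ}

lemma isT.mem_phiDom (hf : ∀ i, ProperConvexLsc (f i)) (hα : ∀ i, 0 < α i) (hβ : 0 < β)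
    (h : isT f b α β z w) : w ∈ phiDom f :=
  fun i => (hf i).ne_top_of_proxMin (div_pos (hα i) hβ) (h.1 i).1

lemma isT.variational_ineq (hf : ∀ i, ProperConvexLsc (f i)) (hα : ∀ i, 0 < α i) (hβ : 0 < β)
    (h : isT f b α β z w) {u : FIdx n m → ℝ} (hu : u ∈ phiDom f) :
    0 ≤ (u - w) ⬝ᵥ Rmat α β *ᵥ (w - z) + (PhiReal f b u - PhiReal f b w) := by
  have hx : ∀ i, 0 ≤ β / α i * ((blk (xpart w) i - blk (xpart z) i)
      ⬝ᵥ (blk (xpart u) i - blk (xpart w) i))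
      + ((f i (blk (xpart u) i)).toReal - (f i (blk (xpart w) i)).toReal) := fun i => by
    simpa only [inv_div] using
      (hf i).prox_variational_ineq (div_pos (hα i) hβ) (h.1 i).1 (hu i)
  have hy : 0 ≤ 1 / β * ((ypart w - ypart z) ⬝ᵥ (ypart u - ypart w))
      + (ypart u ⬝ᵥ b - ypart w ⬝ᵥ b) := by
    simpa only [one_div, iotaCstar, EReal.toReal_coe] using
      (properConvexLsc_iotaCstar b).prox_variational_ineq hβ h.2.1 (EReal.coe_ne_top _)
  have hxsum := Finset.sum_nonneg fun i (_ : i ∈ Finset.univ) => hx i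
  rw [Finset.sum_add_distrib, Finset.sum_sub_distrib] at hxsum
  simp only [dotProduct_Rmat_mulVec, PhiReal, blk_xpart_sub, ypart_sub]
  linarith

lemma isTM.GReal_le (hf : ∀ i, ProperConvexLsc (f i)) (hα : ∀ i, 0 < α i) (hβ : 0 < β)
    {A : ∀ i : Fin s, Matrix (Fin m) (Fin (n i)) ℝ} {M0 M1 M2 : Matrix (FIdx n m) (FIdx n m) ℝ}
    (hM0 : M0 = M1 + M2) {u1 u2 : FIdx n m → ℝ} (h : isTM f A b α β M0 M1 M2 u1 u2 w)
    {u : FIdx n m → ℝ} (hu : u ∈ phiDom f) :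
    GReal f A b w u ≤ (w - u) ⬝ᵥ (M1 *ᵥ (u1 - w) + M2 *ᵥ (u2 - w)) := by
  have hvi := isT.variational_ineq hf hα hβ h hu
  rw [← neg_sub _ w, mulVec_neg, Rmat_mulVec_fixedPoint_residual A hα hβ hM0] at hvi
  have hskew := dotProduct_SAmat_mulVec_self A w
  simp only [GReal, dotProduct_neg, dotProduct_add, sub_dotProduct] at hvi hskew ⊢
  linarith

end Scheme

lemma dotProduct_mulVec_le_specNorm {p q : Type*} [Fintype p] [Fintype q] [DecidableEq q]
    (N : Matrix p q ℝ) (a : q → ℝ) (c : p → ℝ) :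
    c ⬝ᵥ N *ᵥ a ≤ specNorm N * ((a ⬝ᵥ a + c ⬝ᵥ c) / 2) := by
  set T := LinearMap.toContinuousLinearMap (toEuclideanLin N)
  set ea : EuclideanSpace ℝ q := WithLp.toLp 2 a
  set ec : EuclideanSpace ℝ p := WithLp.toLp 2 c
  have ha : ‖ea‖ ^ 2 = a ⬝ᵥ a := by
    rw [EuclideanSpace.norm_sq_eq]; simp [ea, dotProduct, sq]
  have hc : ‖ec‖ ^ 2 = c ⬝ᵥ c := by
    rw [EuclideanSpace.norm_sq_eq]; simp [ec, dotProduct, sq]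
  calc c ⬝ᵥ N *ᵥ a = inner ℝ ec (T ea) := by
        simp [T, ea, ec, EuclideanSpace.inner_eq_star_dotProduct, dotProduct_comm]
    _ ≤ ‖ec‖ * ‖T ea‖ := real_inner_le_norm _ _
    _ ≤ ‖ec‖ * (specNorm N * ‖ea‖) := mul_le_mul_of_nonneg_left (T.le_opNorm ea) (norm_nonneg _)
    _ = specNorm N * (‖ea‖ * ‖ec‖) := by ring
    _ ≤ specNorm N * ((‖ea‖ ^ 2 + ‖ec‖ ^ 2) / 2) :=
      mul_le_mul_of_nonneg_left (by nlinarith [sq_nonneg (‖ea‖ - ‖ec‖)]) (norm_nonneg _)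
    _ = specNorm N * ((a ⬝ᵥ a + c ⬝ᵥ c) / 2) := by rw [ha, hc]

lemma mulVec_dotProduct_mulVec_mulVec {d : Type*} [Fintype d] (Q M : Matrix d d ℝ) (x y : d → ℝ) :
    (Q *ᵥ x) ⬝ᵥ M *ᵥ (Q *ᵥ y) = x ⬝ᵥ (Qᵀ * M * Q) *ᵥ y := by
  rw [mulVec_mulVec, dotProduct_mulVec, dotProduct_mulVec, ← vecMul_transpose, vecMul_vecMul,
    Matrix.mul_assoc]

section Spectral

variable {d : Type*} [Fintype d] [DecidableEq d]

lemma psdSqrt_transpose {H : Matrix d d ℝ} (hH : H.PosSemidef) : (psdSqrt hH)ᵀ = psdSqrt hH := by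
  unfold psdSqrt
  rw [← conjTranspose_eq_transpose_of_trivial, conjTranspose_mul, conjTranspose_mul,
    diagonal_conjTranspose]
  simp [Matrix.mul_assoc, star_eq_conjTranspose, conjTranspose_eq_transpose_of_trivial]

lemma psdSqrt_mul_self {H : Matrix d d ℝ} (hH : H.PosSemidef) : psdSqrt hH * psdSqrt hH = H := by
  set U : Matrix d d ℝ := hH.1.eigenvectorUnitary.1
  set D : Matrix d d ℝ := diagonal ((↑) ∘ (√·) ∘ hH.1.eigenvalues)
  have hU : star U * U = 1 := by simp [U]
  calc psdSqrt hH * psdSqrt hH = U * (D * (star U * U) * D) * star U := by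
        simp only [psdSqrt, Matrix.mul_assoc]; rfl
    _ = H := by
      conv_rhs => rw [hH.1.spectral_theorem, Unitary.conjStarAlgAut_apply]
      rw [hU, Matrix.mul_one, diagonal_mul_diagonal]
      congr 3
      funext i
      simp [Real.mul_self_sqrt (hH.eigenvalues_nonneg i)]

lemma psdSqrt_inv_mul_mul_self {H : Matrix d d ℝ} (hH : H.PosDef) :
    psdSqrt hH.inv.posSemidef * H * psdSqrt hH.inv.posSemidef = 1 := by
  rw [Matrix.mul_assoc, mul_eq_one_comm, Matrix.mul_assoc, psdSqrt_mul_self,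
    mul_nonsing_inv _ hH.det_pos.ne'.isUnit]

lemma dotProduct_mulVec_le_of_specNorm_lt {H M : Matrix d d ℝ} (hH : H.PosDef)
    (hM : specNorm (psdSqrt hH.inv.posSemidef * M * psdSqrt hH.inv.posSemidef) < 1 / 2)
    (a c : d → ℝ) : c ⬝ᵥ M *ᵥ a ≤ 1 / 4 * (a ⬝ᵥ H *ᵥ a + c ⬝ᵥ H *ᵥ c) := by
  set Q := psdSqrt hH.inv.posSemidef
  have hQt : Qᵀ = Q := psdSqrt_transpose _
  have hQHQ : Q * H * Q = 1 := psdSqrt_inv_mul_mul_self hH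
  have hsurj : ∀ x, Q *ᵥ ((H * Q) *ᵥ x) = x := fun x => by
    rw [mulVec_mulVec, ← Matrix.mul_assoc, hQHQ, one_mulVec]
  have hnorm : ∀ x, x ⬝ᵥ H *ᵥ x = ((H * Q) *ᵥ x) ⬝ᵥ ((H * Q) *ᵥ x) := fun x => by
    conv_lhs => rw [← hsurj x]
    rw [mulVec_dotProduct_mulVec_mulVec, hQt, hQHQ, one_mulVec]
  have hself : ∀ x : d → ℝ, 0 ≤ x ⬝ᵥ x := fun x => by simpa using dotProduct_star_self_nonneg x
  calc c ⬝ᵥ M *ᵥ a = ((H * Q) *ᵥ c) ⬝ᵥ (Q * M * Q) *ᵥ ((H * Q) *ᵥ a) := by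
        conv_lhs => rw [← hsurj a, ← hsurj c]
        rw [mulVec_dotProduct_mulVec_mulVec, hQt]
    _ ≤ specNorm (Q * M * Q) * ((((H * Q) *ᵥ a) ⬝ᵥ ((H * Q) *ᵥ a)
          + ((H * Q) *ᵥ c) ⬝ᵥ ((H * Q) *ᵥ c)) / 2) := dotProduct_mulVec_le_specNorm _ _ _
    _ ≤ 1 / 2 * ((((H * Q) *ᵥ a) ⬝ᵥ ((H * Q) *ᵥ a)
          + ((H * Q) *ᵥ c) ⬝ᵥ ((H * Q) *ᵥ c)) / 2) :=
      mul_le_mul_of_nonneg_right hM.le (div_nonneg (add_nonneg (hself _) (hself _)) two_pos.le)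
    _ = 1 / 4 * (a ⬝ᵥ H *ᵥ a + c ⬝ᵥ H *ᵥ c) := by rw [hnorm, hnorm]; ring

end Spectral

section Energy

variable {d : Type*} [Fintype d] {H M1 M2 : Matrix d d ℝ}

def schemeEnergy (H M2 : Matrix d d ℝ) (x0 x1 u : d → ℝ) : ℝ :=
  (x1 - u) ⬝ᵥ H *ᵥ (x1 - u) / 2 - (x1 - u) ⬝ᵥ M2 *ᵥ (x1 - x0)
    + (x1 - x0) ⬝ᵥ H *ᵥ (x1 - x0) / 4

lemma neg_dotProduct_mulVec_le
    (hkey : ∀ a c, c ⬝ᵥ M2 *ᵥ a ≤ 1 / 4 * (a ⬝ᵥ H *ᵥ a + c ⬝ᵥ H *ᵥ c)) (a c : d → ℝ) :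
    -(c ⬝ᵥ M2 *ᵥ a) ≤ 1 / 4 * (a ⬝ᵥ H *ᵥ a + c ⬝ᵥ H *ᵥ c) := by
  simpa [mulVec_neg] using hkey (-a) c

lemma schemeEnergy_nonneg (hpos : ∀ a, 0 ≤ a ⬝ᵥ H *ᵥ a)
    (hkey : ∀ a c, c ⬝ᵥ M2 *ᵥ a ≤ 1 / 4 * (a ⬝ᵥ H *ᵥ a + c ⬝ᵥ H *ᵥ c)) (x0 x1 u : d → ℝ) :
    0 ≤ schemeEnergy H M2 x0 x1 u := by
  have := hkey (x1 - x0) (x1 - u)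
  have := hpos (x1 - u)
  rw [schemeEnergy]
  linarith

lemma schemeEnergy_le
    (hkey : ∀ a c, c ⬝ᵥ M2 *ᵥ a ≤ 1 / 4 * (a ⬝ᵥ H *ᵥ a + c ⬝ᵥ H *ᵥ c)) (x0 x1 u : d → ℝ) :
    schemeEnergy H M2 x0 x1 u
      ≤ 3 / 4 * ((x1 - u) ⬝ᵥ H *ᵥ (x1 - u)) + 1 / 2 * ((x1 - x0) ⬝ᵥ H *ᵥ (x1 - x0)) := by
  have := neg_dotProduct_mulVec_le hkey (x1 - x0) (x1 - u)
  rw [schemeEnergy]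
  linarith

lemma step_le_schemeEnergy_sub (hH : Hᵀ = H) (hM1 : M1 = H - M2 - M2)
    (hkey : ∀ a c, c ⬝ᵥ M2 *ᵥ a ≤ 1 / 4 * (a ⬝ᵥ H *ᵥ a + c ⬝ᵥ H *ᵥ c)) (x0 x1 x2 u : d → ℝ) :
    (x2 - u) ⬝ᵥ (M1 *ᵥ (x1 - x2) + M2 *ᵥ (x0 - x2))
      ≤ schemeEnergy H M2 x0 x1 u - schemeEnergy H M2 x1 x2 u := by
  have hsym : ∀ x y, x ⬝ᵥ H *ᵥ y = y ⬝ᵥ H *ᵥ x := fun x y => by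
    rw [dotProduct_mulVec, ← mulVec_transpose, hH, dotProduct_comm]
  have hk := neg_dotProduct_mulVec_le hkey (x1 - x0) (x2 - x1)
  rw [schemeEnergy, schemeEnergy, hM1]
  simp only [sub_mulVec, mulVec_sub, dotProduct_sub, sub_dotProduct, dotProduct_add] at hk ⊢
  linarith [hsym x0 x1, hsym x0 x2, hsym x0 u, hsym x1 x2, hsym x1 u, hsym x2 u]

lemma sum_step_le_of_dotProduct_le_quarter (hH : Hᵀ = H) (hM1 : M1 = H - M2 - M2)
    (hpos : ∀ a, 0 ≤ a ⬝ᵥ H *ᵥ a)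
    (hkey : ∀ a c, c ⬝ᵥ M2 *ᵥ a ≤ 1 / 4 * (a ⬝ᵥ H *ᵥ a + c ⬝ᵥ H *ᵥ c))
    (v : ℕ → d → ℝ) (u : d → ℝ) (K : ℕ) :
    ∑ k ∈ Finset.range K, (v (k + 2) - u) ⬝ᵥ (M1 *ᵥ (v (k + 1) - v (k + 2))
        + M2 *ᵥ (v k - v (k + 2)))
      ≤ 3 / 4 * ((v 1 - u) ⬝ᵥ H *ᵥ (v 1 - u)) + 1 / 2 * ((v 1 - v 0) ⬝ᵥ H *ᵥ (v 1 - v 0)) := by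
  set E := fun k => schemeEnergy H M2 (v k) (v (k + 1)) u
  calc _ ≤ ∑ k ∈ Finset.range K, (E k - E (k + 1)) :=
        Finset.sum_le_sum fun k _ => step_le_schemeEnergy_sub hH hM1 hkey _ _ _ u
    _ = E 0 - E K := Finset.sum_range_sub' E K
    _ ≤ E 0 := sub_le_self _ (schemeEnergy_nonneg hpos hkey _ _ u)
    _ ≤ _ := schemeEnergy_le hkey _ _ u

end Energy

lemma ConditionM.sum_step_le {d : Type*} [Fintype d] [DecidableEq d] {M0 M1 M2 : Matrix d d ℝ}
    (hM : ConditionM M0 M1 M2) (v : ℕ → d → ℝ) (u : d → ℝ) (K : ℕ) :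
    ∑ k ∈ Finset.range K, (v (k + 2) - u) ⬝ᵥ (M1 *ᵥ (v (k + 1) - v (k + 2))
        + M2 *ᵥ (v k - v (k + 2)))
      ≤ 3 / 4 * ((v 1 - u) ⬝ᵥ (M0 + M2) *ᵥ (v 1 - u))
        + 1 / 2 * ((v 1 - v 0) ⬝ᵥ (M0 + M2) *ᵥ (v 1 - v 0)) := by
  obtain ⟨hM0, hH, hspec⟩ := hM
  have hsym : (M0 + M2)ᵀ = M0 + M2 := by
    simpa only [conjTranspose_eq_transpose_of_trivial] using hH.isHermitian.eq
  exact sum_step_le_of_dotProduct_le_quarter hsym (by rw [hM0]; abel)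
    (fun a => by simpa using hH.posSemidef.dotProduct_mulVec_nonneg a)
    (dotProduct_mulVec_le_of_specNorm_lt hH hspec) v u K

theorem scheme_averaged_G_bound_general {s m : ℕ} {n : Fin s → ℕ}
    (f : ∀ i : Fin s, (Fin (n i) → ℝ) → EReal)
    (A : ∀ i : Fin s, Matrix (Fin m) (Fin (n i)) ℝ) (b : Fin m → ℝ)
    (hf : ∀ i, ProperConvexLsc (f i))
    (α : Fin s → ℝ) (hα : ∀ i, 0 < α i) (β : ℝ) (hβ : 0 < β)
    (M0 M1 M2 : Matrix (FIdx n m) (FIdx n m) ℝ)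
    (hM : ConditionM M0 M1 M2)
    (v : ℕ → FIdx n m → ℝ)
    (hrec : ∀ k : ℕ, isTM f A b α β M0 M1 M2 (v (k + 1)) (v k) (v (k + 2))) :
    ∀ (K : ℕ), 1 ≤ K → ∀ w : FIdx n m → ℝ,
      Gfun f A b ((1 / (K : ℝ)) • ∑ k ∈ Finset.Icc 2 (K + 1), v k) w ≤
        ((((3 : ℝ) / 4 * ((v 1 - w) ⬝ᵥ (M0 + M2).mulVec (v 1 - w)) +
           (1 : ℝ) / 2 * ((v 1 - v 0) ⬝ᵥ (M0 + M2).mulVec (v 1 - v 0))) / (K : ℝ) : ℝ) :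
          EReal) := by
  intro K hK w
  by_cases hw : w ∉ phiDom f
  · rw [Gfun_eq_bot hf _ hw]
    exact bot_le
  rw [not_not] at hw
  have hdom : ∀ k, v (k + 2) ∈ phiDom f := fun k => isT.mem_phiDom hf hα hβ (hrec k)
  have hshift : ∑ k ∈ Finset.Icc 2 (K + 1), v k = ∑ k ∈ Finset.range K, v (k + 2) := by
    rw [← Finset.Ico_add_one_right_eq_Icc, Finset.sum_Ico_eq_sum_range,
      show K + 1 + 1 - 2 = K by omega]
    simp only [add_comm 2]
  rw [hshift, Gfun_eq_coe_GReal hf ((convex_phiDom hf).avg_range_mem hK hdom) hw,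
    EReal.coe_le_coe_iff]
  calc _ ≤ 1 / K * ∑ k ∈ Finset.range K, GReal f A b (v (k + 2)) w :=
        (convexOn_GReal_left hf w).map_avg_range_le hK hdom
    _ ≤ 1 / K * ∑ k ∈ Finset.range K, (v (k + 2) - w) ⬝ᵥ (M1 *ᵥ (v (k + 1) - v (k + 2))
          + M2 *ᵥ (v k - v (k + 2))) := by
        gcongr with k
        exact isTM.GReal_le hf hα hβ hM.1 (hrec k) hw
    _ ≤ _ := by
        rw [one_div_mul_eq_div]
        exact div_le_div_of_nonneg_right (hM.sum_step_le v w K) K.cast_nonneg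

/-- under Condition-M, with `H := M₀ + M₂` and
`v̄_K := (1/K)∑_{k=2}^{K+1} v^k`, for every `K ≥ 1` and every `v`:
`G(v̄_K, v) ≤ ((3/4)‖v¹ − v‖_H² + (1/2)‖v¹ − v⁰‖_H²)/K`. -/
theorem scheme_averaged_G_bound {s m : ℕ} {n : Fin s → ℕ}
    (f : ∀ i : Fin s, (Fin (n i) → ℝ) → EReal)
    (A : ∀ i : Fin s, Matrix (Fin m) (Fin (n i)) ℝ) (b : Fin m → ℝ)
    (hf : ∀ i, ProperConvexLsc (f i))
    (α : Fin s → ℝ) (hα : ∀ i, 0 < α i) (β : ℝ) (hβ : 0 < β)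
    (M0 M1 M2 : Matrix (FIdx n m) (FIdx n m) ℝ)
    (hwd : TMWellDefined f A b α β M0 M1 M2)
    (hM : ConditionM M0 M1 M2)
    (v : ℕ → FIdx n m → ℝ)
    (hrec : ∀ k : ℕ, isTM f A b α β M0 M1 M2 (v (k + 1)) (v k) (v (k + 2))) :
    ∀ (K : ℕ), 1 ≤ K → ∀ w : FIdx n m → ℝ,
      Gfun f A b ((1 / (K : ℝ)) • ∑ k ∈ Finset.Icc 2 (K + 1), v k) w ≤
        ((((3 : ℝ) / 4 * ((v 1 - w) ⬝ᵥ (M0 + M2).mulVec (v 1 - w)) +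
           (1 : ℝ) / 2 * ((v 1 - v 0) ⬝ᵥ (M0 + M2).mulVec (v 1 - v 0))) / (K : ℝ) : ℝ) :
          EReal) :=
  scheme_averaged_G_bound_general f A b hf α hα β hβ M0 M1 M2 hM v hrec
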